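/- For all positive integers a, c, every real m ≥ 2, and every real z < 1: H_{a,c}(z;m) equals 1/(c−1)! times the (c−1)-st derivative at z of the function z ↦ H_{a,1}(z;m). -/

import Mathlib

/-!
Write `H_{a,b}(z) = Γ(d) / (Γ(a) Γ(b)) ∫₀¹ g(t) (1 - z t)^(-d) dt` with `g(t) = (1 - t)^(a-1) t^(b-1)`.
Differentiating under the integral sign (legitimate for `z < 1`, where `1 - z t` stays away from
`0` uniformly on `[0, 1]`) multiplies the integrand by `d t (1 - z t)^(-1)`, so the `k`-th
derivative of `H_{a,1}` is `(d)_k Γ(d) / Γ(a) ∫₀¹ (1 - t)^(a-1) t^k (1 - z t)^(-(d+k)) dt`.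
Since `Γ(d) (d)_k = Γ(d + k)` and `Γ(k + 1) = k!`, this is `k! H_{a,k+1}(z)`.
-/

open MeasureTheory Set

/-- One-variable hypergeometric family `H_{a,b}(z;m)` from the rearrangement lemma. -/
noncomputable def Hab (a b : ℕ) (m z : ℝ) : ℝ :=
  (Real.Gamma ((a : ℝ) + b + m / 2 - 2) / (Real.Gamma a * Real.Gamma b)) *
    ∫ t in (0:ℝ)..1, (1 - t) ^ (a - 1) * t ^ (b - 1) *
      (1 - z * t) ^ (-((a : ℝ) + b + m / 2 - 2))

theorem Real.Gamma_add_nat_eq_mul_ascPochhammer {s : ℝ} (hs : 0 < s) (n : ℕ) :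
    Real.Gamma (s + n) = Real.Gamma s * (ascPochhammer ℝ n).eval s := by
  induction n with
  | zero => simp
  | succ n ih =>
    rw [Nat.cast_succ, ← add_assoc, Real.Gamma_add_one (by positivity), ih,
      ascPochhammer_succ_eval]
    ring

lemma min_one_sub_le_one_sub_mul {x y t : ℝ} (hxy : x ≤ y) (ht : t ∈ Icc (0:ℝ) 1) :
    min 1 (1 - y) ≤ 1 - x * t := by
  have h₁ := mul_le_mul_of_nonneg_left (min_le_left 1 (1 - y)) (sub_nonneg.2 ht.2)
  have h₂ := mul_le_mul_of_nonneg_left (min_le_right 1 (1 - y)) ht.1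
  nlinarith [mul_le_mul_of_nonneg_right hxy ht.1]

lemma one_sub_mul_pos {z t : ℝ} (hz : z < 1) (ht : t ∈ Icc (0:ℝ) 1) : 0 < 1 - z * t :=
  (lt_min one_pos (sub_pos.2 hz)).trans_le (min_one_sub_le_one_sub_mul le_rfl ht)

noncomputable def eulerIntegral (g : ℝ → ℝ) (e z : ℝ) : ℝ :=
  ∫ t in (0:ℝ)..1, g t * (1 - z * t) ^ (-e)

section eulerIntegral

variable {g : ℝ → ℝ} {z : ℝ}

lemma continuousOn_one_sub_mul_rpow (e : ℝ) (hz : z < 1) :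
    ContinuousOn (fun t => (1 - z * t) ^ (-e)) (Icc 0 1) :=
  (continuous_const.sub (continuous_const.mul continuous_id)).continuousOn.rpow_const
    fun _ ht => Or.inl (one_sub_mul_pos hz ht).ne'

lemma intervalIntegrable_mul_one_sub_mul_rpow (hg : IntervalIntegrable g volume 0 1) (e : ℝ)
    (hz : z < 1) : IntervalIntegrable (fun t => g t * (1 - z * t) ^ (-e)) volume 0 1 :=
  hg.mul_continuousOn (by simpa using continuousOn_one_sub_mul_rpow e hz)

lemma hasDerivAt_one_sub_mul_rpow (e t : ℝ) {x : ℝ} (hx : 0 < 1 - x * t) :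
    HasDerivAt (fun x => (1 - x * t) ^ (-e)) (e * (t * (1 - x * t) ^ (-(e + 1)))) x := by
  have := (Real.hasDerivAt_rpow_const (p := -e) (Or.inl hx.ne')).comp x
    (((hasDerivAt_id x).mul_const t).const_sub 1)
  refine this.congr_deriv ?_
  rw [show -e - 1 = -(e + 1) by ring]
  ring

theorem hasDerivAt_eulerIntegral (hg : IntervalIntegrable g volume 0 1) {e : ℝ} (he : 0 ≤ e)
    (hz : z < 1) :
    HasDerivAt (eulerIntegral g e) (e * eulerIntegral (fun t => g t * t) (e + 1) z) z := by
  obtain ⟨y, hzy, hy⟩ := exists_between hz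
  have hδ : 0 < min 1 (1 - y) := lt_min one_pos (sub_pos.2 hy)
  have hgt : IntervalIntegrable (fun t => g t * t) volume 0 1 :=
    hg.mul_continuousOn continuous_id.continuousOn
  have hdom := intervalIntegral.hasDerivAt_integral_of_dominated_loc_of_deriv_le
    (F := fun x t => g t * (1 - x * t) ^ (-e))
    (F' := fun x t => e * (g t * t * (1 - x * t) ^ (-(e + 1))))
    (bound := fun t => e * min 1 (1 - y) ^ (-(e + 1)) * |g t|)
    (Iio_mem_nhds hzy)
    (Filter.eventually_of_mem (Iio_mem_nhds hz) fun x hx =>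
      (intervalIntegrable_mul_one_sub_mul_rpow hg e hx).aestronglyMeasurable_restrict_uIoc)
    (intervalIntegrable_mul_one_sub_mul_rpow hg e hz)
    ((intervalIntegrable_mul_one_sub_mul_rpow hgt (e + 1) hz).const_mul e
      |>.aestronglyMeasurable_restrict_uIoc)
    ?_ (hg.abs.const_mul _) ?_
  · rw [eulerIntegral, ← intervalIntegral.integral_const_mul]
    exact hdom.2
  · refine Filter.Eventually.of_forall fun t ht x hx => ?_
    rw [uIoc_of_le zero_le_one] at ht
    have hxt := min_one_sub_le_one_sub_mul (le_of_lt hx) (Ioc_subset_Icc_self ht)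
    have hpos := hδ.trans_le hxt
    have hpow := Real.rpow_le_rpow_of_nonpos hδ hxt (by linarith : -(e + 1) ≤ 0)
    rw [Real.norm_eq_abs, abs_mul, abs_mul, abs_mul, abs_of_nonneg ht.1.le, abs_of_nonneg he,
      abs_of_pos (Real.rpow_pos_of_pos hpos _)]
    calc e * (|g t| * t * (1 - x * t) ^ (-(e + 1)))
        ≤ e * (|g t| * 1 * min 1 (1 - y) ^ (-(e + 1))) := by gcongr; exact ht.2
      _ = _ := by ring
  · refine Filter.Eventually.of_forall fun t ht x hx => ?_
    rw [uIoc_of_le zero_le_one] at ht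
    have hpos := one_sub_mul_pos (hx.trans hy) (Ioc_subset_Icc_self ht)
    refine ((hasDerivAt_one_sub_mul_rpow e t hpos).const_mul (g t)).congr_deriv ?_
    ring

theorem iteratedDeriv_eulerIntegral (hg : IntervalIntegrable g volume 0 1) {e : ℝ} (he : 0 ≤ e)
    (k : ℕ) (hz : z < 1) :
    iteratedDeriv k (eulerIntegral g e) z =
      (ascPochhammer ℝ k).eval e * eulerIntegral (fun t => g t * t ^ k) (e + k) z := by
  induction k generalizing z with
  | zero => simp
  | succ k ih =>
    have hgk : IntervalIntegrable (fun t => g t * t ^ k) volume 0 1 :=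
      hg.mul_continuousOn (continuous_pow k).continuousOn
    have hev : iteratedDeriv k (eulerIntegral g e) =ᶠ[nhds z]
        fun w => (ascPochhammer ℝ k).eval e * eulerIntegral (fun t => g t * t ^ k) (e + k) w :=
      Filter.eventually_of_mem (Iio_mem_nhds hz) fun w hw => ih hw
    rw [iteratedDeriv_succ, hev.deriv_eq,
      ((hasDerivAt_eulerIntegral hgk (by positivity) hz).const_mul _).deriv,
      ascPochhammer_succ_eval]
    simp only [pow_succ, mul_assoc, Nat.cast_succ, add_assoc]

end eulerIntegral

lemma Hab_add_one (a k : ℕ) (m z : ℝ) :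
    Hab a (k + 1) m z = Real.Gamma (a + m / 2 - 1 + k) / (Real.Gamma a * k.factorial) *
      eulerIntegral (fun t => (1 - t) ^ (a - 1) * t ^ k) (a + m / 2 - 1 + k) z := by
  rw [Hab, eulerIntegral, Nat.add_sub_cancel, Nat.cast_succ, Real.Gamma_nat_eq_factorial,
    show (a : ℝ) + (k + 1) + m / 2 - 2 = a + m / 2 - 1 + k by ring]

/-- `H_{a,c}` is `1/(c−1)!` times the `(c−1)`-st derivative of `H_{a,1}`. -/
theorem stmt12 (a c : ℕ) (ha : 0 < a) (hc : 0 < c) (m : ℝ) (hm : 2 ≤ m)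
    (z : ℝ) (hz : z < 1) :
    Hab a c m z =
      (1 / (Nat.factorial (c - 1) : ℝ)) *
        iteratedDeriv (c - 1) (fun w => Hab a 1 m w) z := by
  obtain ⟨k, rfl⟩ := Nat.exists_eq_add_one_of_ne_zero hc.ne'
  have he : 0 < (a : ℝ) + m / 2 - 1 := by
    have : (1 : ℝ) ≤ a := by exact_mod_cast ha
    linarith
  have hHab_one : Hab a 1 m = fun w => Real.Gamma (a + m / 2 - 1) / Real.Gamma a *
      eulerIntegral (fun t => (1 - t) ^ (a - 1)) (a + m / 2 - 1) w := by
    funext w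
    simpa using Hab_add_one a 0 m w
  have hg : IntervalIntegrable (fun t : ℝ => (1 - t) ^ (a - 1)) volume 0 1 :=
    (continuous_const.sub continuous_id |>.pow _).intervalIntegrable 0 1
  rw [Nat.add_sub_cancel, hHab_one, iteratedDeriv_const_mul_field,
    iteratedDeriv_eulerIntegral hg he.le k hz, Hab_add_one,
    Real.Gamma_add_nat_eq_mul_ascPochhammer he]
  ring
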